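/- Let G be a directed acyclic graph, let Z, V^∞ ⊆ V(G), and let (G', V'^∞) := torso(G, V^∞, Z) be the parity-preserving torso. Then for every pair of nodes u, v ∈ V(G) \ Z, there is a directed u→v path P in G if and only if there is a directed u→v path Q in G' of the same parity (odd/even length); moreover, Q can be chosen so that the nodes of P lying in V(G) \ Z coincide with the nodes of Q lying in V(G) \ Z, i.e., V(P) ∩ (V(G) \ Z) = V(Q) ∩ (V(G) \ Z). -/

import Mathlib

/-- A (simple) directed path in the directed graph `G`, represented as a nonempty
list of pairwise distinct vertices in which every consecutive pair is an edge of `G`. -/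
def IsPath {V : Type*} (G : V → V → Prop) (p : List V) : Prop :=
  p ≠ [] ∧ p.Chain' G ∧ p.Nodup

/-- `p` is a directed path from `u` to `v` in `G`. -/
def IsPathFrom {V : Type*} (G : V → V → Prop) (u v : V) (p : List V) : Prop :=
  IsPath G p ∧ p.head? = some u ∧ p.getLast? = some v

/-- The length (number of edges) of a path, given as its list of vertices. -/
def pathLen {V : Type*} (p : List V) : ℕ := p.length - 1

/-- The list of directed edges traversed by a path. -/
def edgesOf {V : Type*} (p : List V) : List (V × V) := p.zip p.tail

/-- A directed graph is acyclic (a DAG) if no vertex lies on a directed cycle. -/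
def Acyclic {V : Type*} (G : V → V → Prop) : Prop :=
  ∀ v, ¬ Relation.TransGen G v v

/-- The graph obtained from `G` by deleting the vertex set `M`. -/
def delV {V : Type*} (G : V → V → Prop) (M : Set V) : V → V → Prop :=
  fun a b => G a b ∧ a ∉ M ∧ b ∉ M

/-- All internal vertices of the path `p` (all vertices except the two endpoints)
lie in `Z`. -/
def internalsIn {V : Type*} (Z : Set V) (p : List V) : Prop :=
  ∀ x ∈ (p.drop 1).dropLast, x ∈ Z

/-- The parity-preserving torso of `G` with respect to `Z`.  Its vertices are
`Sum.inl v` for the original vertices `v ∈ V(G) \ Z`, together with new vertices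
`Sum.inr (u, v)` playing the role of `x_{uv}`.  For every `u, v ∉ Z` joined in `G`
by an odd path whose internal vertices all lie in `Z` there is an edge `u → v`
(this includes the edges of `G \ Z`, which are odd paths with no internal
vertices), and for every pair of distinct `u, v ∉ Z` joined in `G` by an even
path whose internal vertices all lie in `Z` there are edges `u → x_{uv} → v`. -/
def torsoGraph {V : Type*} (G : V → V → Prop) (Z : Set V) :
    V ⊕ V × V → V ⊕ V × V → Prop
  | Sum.inl u, Sum.inl v => u ∉ Z ∧ v ∉ Z ∧
      ∃ p, IsPathFrom G u v p ∧ Odd (pathLen p) ∧ internalsIn Z p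
  | Sum.inl u, Sum.inr w => w.1 = u ∧ u ∉ Z ∧ w.2 ∉ Z ∧ u ≠ w.2 ∧
      ∃ p, IsPathFrom G u w.2 p ∧ Even (pathLen p) ∧ internalsIn Z p
  | Sum.inr w, Sum.inl v => w.2 = v ∧ w.1 ∉ Z ∧ v ∉ Z ∧ w.1 ≠ v ∧
      ∃ p, IsPathFrom G w.1 v p ∧ Even (pathLen p) ∧ internalsIn Z p
  | Sum.inr _, Sum.inr _ => False

/-- The protected vertex set of the parity-preserving torso: the surviving old
protected vertices together with all the new vertices `x_{uv}`. -/
def torsoProtected {V : Type*} (Vinf Z : Set V) : Set (V ⊕ V × V) :=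
  Sum.inl '' (Vinf \ Z) ∪ Set.range Sum.inr

/-!
Cut a `u → v` path of `G` at its vertices outside `Z`. Every piece has all its internal vertices
in `Z`, so the torso replaces it by one edge if it is odd and by the detour `a → x_{ab} → b` if it
is even; this keeps the parity and the vertices outside `Z`. Conversely every torso edge or detour
expands back into such a piece. Both translations only produce walks, and these are paths because
`G` is acyclic, hence so is its torso.
-/

open List Relation

theorem List.IsChain.cons_append_cons {α : Type*} {R : α → α → Prop} {a b : α}
    {l₁ l₂ : List α} (h₁ : IsChain R (a :: (l₁ ++ [b]))) (h₂ : IsChain R (b :: l₂)) :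
    IsChain R (a :: (l₁ ++ b :: l₂)) := by
  simpa using h₁.append_overlap (l₁ := a :: l₁) (l₃ := l₂) h₂ (cons_ne_nil _ _)

theorem List.getLast?_cons_append_cons {α : Type*} (a b : α) (l₁ l₂ : List α) :
    (a :: (l₁ ++ b :: l₂)).getLast? = (b :: l₂).getLast? := by
  simp [getLast?_cons, getLast?_append]

section

variable {V : Type*} {G : V → V → Prop} {Z : Set V}

theorem List.IsChain.nodup_of_acyclic {l : List V} (hG : Acyclic G) (h : l.IsChain G) :
    l.Nodup :=
  have : Std.Irrefl (TransGen G) := ⟨hG⟩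
  (h.imp fun _ _ => TransGen.single).pairwise.nodup

theorem List.IsChain.transGen_cons_append_singleton {u w : V} :
    ∀ {m : List V}, (u :: (m ++ [w])).IsChain G → TransGen G u w
  | [], h => .single (isChain_pair.1 h)
  | _ :: _, h =>
    .head (isChain_cons_cons.1 h).1 (isChain_cons_cons.1 h).2.transGen_cons_append_singleton

@[simp]
theorem pathLen_cons (a : V) (l : List V) : pathLen (a :: l) = l.length := by
  simp [pathLen]

@[simp]
theorem internalsIn_cons_append_singleton {u w : V} {m : List V} :
    internalsIn Z (u :: (m ++ [w])) ↔ ∀ x ∈ m, x ∈ Z := by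
  simp [internalsIn]

theorem IsPath.infix {l l' : List V} (hp : IsPath G l) (h : l' <:+: l) (hne : l' ≠ []) :
    IsPath G l' :=
  ⟨hne, hp.2.1.infix h, hp.2.2.sublist h.sublist⟩

theorem IsPathFrom.eq_of_pathLen_eq_zero {u w : V} {p : List V} (hp : IsPathFrom G u w p)
    (hlen : pathLen p = 0) : u = w := by
  obtain ⟨⟨hne, -, -⟩, hhead, hlast⟩ := hp
  rcases p with _ | ⟨a, _ | ⟨b, q⟩⟩ <;> simp_all [pathLen]

theorem IsPathFrom.exists_eq_cons_append_singleton {u w : V} {p : List V}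
    (hp : IsPathFrom G u w p) (hlen : 0 < pathLen p) : ∃ m, p = u :: (m ++ [w]) := by
  obtain ⟨-, hhead, hlast⟩ := hp
  rcases p with _ | ⟨a, q⟩
  · simp [pathLen] at hlen
  obtain rfl : a = u := by simpa using hhead
  rcases eq_nil_or_concat q with rfl | ⟨m, b, rfl⟩
  · simp at hlen
  exact ⟨m, by simpa [getLast?_cons] using hlast⟩

theorem isPathFrom_of_isChain (hG : Acyclic G) {u v : V} {l : List V}
    (h : (u :: l).IsChain G) (hv : (u :: l).getLast? = some v) : IsPathFrom G u v (u :: l) :=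
  ⟨⟨cons_ne_nil _ _, h, h.nodup_of_acyclic hG⟩, rfl, hv⟩

theorem exists_segment_of_torsoGraph {x : V ⊕ V × V} {w : V} (h : torsoGraph G Z x (.inl w)) :
    ∃ m, (x.elim id Prod.fst :: (m ++ [w])).IsChain G ∧ (∀ y ∈ m, y ∈ Z) ∧
      (Even m.length ↔ x.isLeft) := by
  have segment : ∀ {u p}, IsPathFrom G u w p → internalsIn Z p → 0 < pathLen p →
      ∃ m, (u :: (m ++ [w])).IsChain G ∧ (∀ y ∈ m, y ∈ Z) ∧ pathLen p = m.length + 1 := by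
    intro u p hp hint hlen
    obtain ⟨m, rfl⟩ := hp.exists_eq_cons_append_singleton hlen
    exact ⟨m, hp.1.2.1, by simpa using hint, by simp⟩
  rcases x with u | ⟨u, v⟩
  · obtain ⟨-, -, p, hp, hodd, hint⟩ := h
    obtain ⟨m, hc, hm, hlen⟩ := segment hp hint hodd.pos
    exact ⟨m, hc, hm, by simpa [hlen, Nat.odd_add_one] using hodd⟩
  · obtain ⟨rfl, -, -, hne, p, hp, hev, hint⟩ := h
    obtain ⟨m, hc, hm, hlen⟩ :=
      segment hp hint (Nat.pos_of_ne_zero fun h => hne (hp.eq_of_pathLen_eq_zero h))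
    exact ⟨m, hc, hm, by simpa [hlen, Nat.even_add_one] using hev⟩

theorem torsoGraph_acyclic (hG : Acyclic G) : Acyclic (torsoGraph G Z) := by
  -- Sending `x_{ab}` to `a` turns torso edges into `G`-walks, nonempty for edges entering an old
  -- vertex; and every torso cycle passes through an old vertex.
  let f : V ⊕ V × V → V := Sum.elim id Prod.fst
  have into_inl : ∀ {x w}, torsoGraph G Z x (.inl w) → TransGen G (f x) w := fun h =>
    let ⟨_, hc, _⟩ := exists_segment_of_torsoGraph h
    hc.transGen_cons_append_singleton
  have into_inr : ∀ {x c}, torsoGraph G Z x (.inr c) → x = .inl c.1 := by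
    rintro (x | x) c h
    exacts [congrArg _ h.1.symm, h.elim]
  have lift : ∀ {x y}, ReflTransGen (torsoGraph G Z) x y → ReflTransGen G (f x) (f y) :=
    ReflTransGen.lift' f (fun x y h => by
      rcases y with w | c
      · exact (into_inl h).to_reflTransGen
      · rw [into_inr h]
        exact .refl) _ _
  intro x hx
  obtain ⟨u, hu⟩ : ∃ u, TransGen (torsoGraph G Z) (.inl u) (.inl u) := by
    rcases x with u | c
    · exact ⟨u, hx⟩
    · obtain ⟨y, hxy, hyx⟩ := TransGen.tail'_iff.1 hx
      rw [into_inr hyx] at hxy hyx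
      exact ⟨c.1, .head' hyx hxy⟩
  obtain ⟨y, huy, hyu⟩ := TransGen.tail'_iff.1 hu
  exact hG u (TransGen.trans_right (lift huy) (into_inl hyu))

theorem exists_torsoGraph_bypass {u w : V} {m : List V} (hu : u ∉ Z) (hw : w ∉ Z)
    (hm : ∀ y ∈ m, y ∈ Z) (hp : IsPath G (u :: (m ++ [w]))) :
    ∃ b : List (V ⊕ V × V), (.inl u :: (b ++ [.inl w])).IsChain (torsoGraph G Z) ∧
      (∀ x, .inl x ∉ b) ∧ m.length % 2 = b.length % 2 := by
  have hpath : IsPathFrom G u w (u :: (m ++ [w])) := ⟨hp, rfl, by simp [getLast?_cons]⟩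
  have hint : internalsIn Z (u :: (m ++ [w])) := internalsIn_cons_append_singleton.2 hm
  rcases Nat.even_or_odd m.length with hev | hodd
  · exact ⟨[], isChain_pair.2 ⟨hu, hw, _, hpath, by simpa [Nat.odd_add_one] using hev, hint⟩,
      by simp, by simpa [Nat.even_iff] using hev⟩
  · have huw : u ≠ w := fun h => (nodup_cons.1 hp.2.2).1 (by simp [h])
    have hev : Even (pathLen (u :: (m ++ [w]))) := by simpa [Nat.even_add_one] using hodd
    exact ⟨[.inr (u, w)], isChain_cons_cons.2 ⟨⟨rfl, hu, hw, huw, _, hpath, hev, hint⟩,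
      isChain_pair.2 ⟨rfl, hu, hw, huw, _, hpath, hev, hint⟩⟩, by simp,
      by simpa [Nat.odd_iff] using hodd⟩

def AgreeOutside (Z : Set V) (P : List V) (Q : List (V ⊕ V × V)) : Prop :=
  P.length % 2 = Q.length % 2 ∧ ∀ x ∉ Z, x ∈ P ↔ .inl x ∈ Q

theorem agreeOutside_singleton (u : V) : AgreeOutside Z [u] [.inl u] :=
  ⟨rfl, by simp⟩

theorem AgreeOutside.cons_append_cons {u w : V} {m P : List V} {b Q : List (V ⊕ V × V)}
    (h : AgreeOutside Z (w :: P) (.inl w :: Q)) (hm : ∀ y ∈ m, y ∈ Z) (hb : ∀ x, .inl x ∉ b)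
    (hpar : m.length % 2 = b.length % 2) :
    AgreeOutside Z (u :: (m ++ w :: P)) (.inl u :: (b ++ .inl w :: Q)) := by
  have hlen := h.1
  simp only [length_cons] at hlen
  refine ⟨by simp only [length_cons, length_append]; omega, fun x hx => ?_⟩
  have hxm : x ∉ m := fun h => hx (hm x h)
  simp only [mem_cons, mem_append, hxm, hb, false_or, Sum.inl.injEq, h.2 x hx]

theorem AgreeOutside.odd_pathLen_iff {P : List V} {Q : List (V ⊕ V × V)}
    (h : AgreeOutside Z P Q) (hP : P ≠ []) (hQ : Q ≠ []) :
    Odd (pathLen P) ↔ Odd (pathLen Q) := by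
  have := h.1
  have := length_pos_iff.2 hP
  have := length_pos_iff.2 hQ
  simp only [pathLen, Nat.odd_iff]
  omega

theorem AgreeOutside.diff_eq {P : List V} {Q : List (V ⊕ V × V)} (h : AgreeOutside Z P Q) :
    {x | x ∈ P} \ Z = {x | .inl x ∈ Q} \ Z :=
  Set.ext fun x => and_congr_left (h.2 x)

-- `m` collects the vertices of `Z` met since the last vertex `u` outside `Z`.
theorem exists_torsoGraph_walk_of_path {v : V} (hv : v ∉ Z) :
    ∀ (s m : List V) (u : V), u ∉ Z → (∀ y ∈ m, y ∈ Z) → IsPath G (u :: (m ++ s)) →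
      (u :: (m ++ s)).getLast? = some v →
      ∃ Q, (.inl u :: Q).IsChain (torsoGraph G Z) ∧ (.inl u :: Q).getLast? = some (.inl v) ∧
        AgreeOutside Z (u :: (m ++ s)) (.inl u :: Q)
  | [], m, u, _, hm, _, hlast => by
    rcases eq_nil_or_concat m with rfl | ⟨m, z, rfl⟩
    · obtain rfl : u = v := by simpa using hlast
      exact ⟨[], .singleton _, rfl, agreeOutside_singleton u⟩
    · obtain rfl : z = v := by simpa [getLast?_cons] using hlast
      exact absurd (hm z (by simp)) hv
  | w :: s, m, u, hu, hm, hp, hlast => by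
    by_cases hw : w ∈ Z
    · have hmw : ∀ y ∈ m ++ [w], y ∈ Z := by simpa [or_imp, forall_and] using ⟨hm, hw⟩
      simpa using exists_torsoGraph_walk_of_path hv s (m ++ [w]) u hu hmw (by simpa using hp)
        (by simpa using hlast)
    · obtain ⟨b, hbc, hb, hpar⟩ :=
        exists_torsoGraph_bypass hu hw hm (hp.infix ⟨[], s, by simp⟩ (cons_ne_nil _ _))
      obtain ⟨Q, hQc, hQl, hQ⟩ := exists_torsoGraph_walk_of_path hv s [] w hw (by simp)
        (hp.infix ⟨u :: m, [], by simp⟩ (cons_ne_nil _ _))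
        (by rwa [getLast?_cons_append_cons] at hlast)
      exact ⟨b ++ .inl w :: Q, hbc.cons_append_cons hQc, by rwa [getLast?_cons_append_cons],
        hQ.cons_append_cons hm hb hpar⟩

theorem exists_walk_of_torsoGraph_walk {v : V} :
    ∀ (Q : List (V ⊕ V × V)) (u : V), (.inl u :: Q).IsChain (torsoGraph G Z) →
      (.inl u :: Q).getLast? = some (.inl v) →
      ∃ P, (u :: P).IsChain G ∧ (u :: P).getLast? = some v ∧
        AgreeOutside Z (u :: P) (.inl u :: Q)
  | [], u, _, h => ⟨[], .singleton u, by simpa using h, agreeOutside_singleton u⟩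
  | .inl w :: Q, u, hc, h => by
    obtain ⟨huw, hwQ⟩ := isChain_cons_cons.1 hc
    obtain ⟨m, hmc, hm, hpar⟩ := exists_segment_of_torsoGraph huw
    obtain ⟨P, hPc, hPl, hP⟩ :=
      exists_walk_of_torsoGraph_walk Q w hwQ (by rwa [getLast?_cons_cons] at h)
    exact ⟨m ++ w :: P, hmc.cons_append_cons hPc, by rwa [getLast?_cons_append_cons],
      hP.cons_append_cons (b := []) hm (by simp) (by simpa [Nat.even_iff] using hpar)⟩
  | [.inr _], _, _, h => by simp at h
  | .inr _ :: .inr _ :: _, _, hc, _ => (isChain_cons_cons.1 (isChain_cons_cons.1 hc).2).1.elim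
  | .inr c :: .inl w :: Q, u, hc, h => by
    obtain ⟨huc, hcw, hwQ⟩ := isChain_cons_cons.1 hc |>.imp_right isChain_cons_cons.1
    obtain rfl : c.1 = u := huc.1
    obtain ⟨m, hmc, hm, hpar⟩ := exists_segment_of_torsoGraph hcw
    obtain ⟨P, hPc, hPl, hP⟩ := exists_walk_of_torsoGraph_walk Q w hwQ
      (by rwa [getLast?_cons_cons, getLast?_cons_cons] at h)
    exact ⟨m ++ w :: P, hmc.cons_append_cons hPc, by rwa [getLast?_cons_append_cons],
      hP.cons_append_cons (b := [.inr c]) hm (by simp) (by simpa [Nat.even_iff] using hpar)⟩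

theorem exists_torsoGraph_path_of_path (hG : Acyclic G) {u v : V} (hu : u ∉ Z) (hv : v ∉ Z)
    {P : List V} (hP : IsPathFrom G u v P) :
    ∃ Q, IsPathFrom (torsoGraph G Z) (.inl u) (.inl v) Q ∧ AgreeOutside Z P Q := by
  obtain ⟨hpath, hhead, hlast⟩ := hP
  obtain ⟨s, rfl⟩ := head?_eq_some_iff.1 hhead
  obtain ⟨Q, hQc, hQl, hQ⟩ := exists_torsoGraph_walk_of_path hv s [] u hu (by simp) hpath hlast
  exact ⟨_, isPathFrom_of_isChain (torsoGraph_acyclic hG) hQc hQl, hQ⟩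

theorem exists_path_of_torsoGraph_path (hG : Acyclic G) {u v : V} {Q : List (V ⊕ V × V)}
    (hQ : IsPathFrom (torsoGraph G Z) (.inl u) (.inl v) Q) :
    ∃ P, IsPathFrom G u v P ∧ AgreeOutside Z P Q := by
  obtain ⟨⟨-, hchain, -⟩, hhead, hlast⟩ := hQ
  obtain ⟨R, rfl⟩ := head?_eq_some_iff.1 hhead
  obtain ⟨P, hPc, hPl, hP⟩ := exists_walk_of_torsoGraph_walk R u hchain hlast
  exact ⟨_, isPathFrom_of_isChain hG hPc hPl, hP⟩

end

theorem torso_preserves_paths {V : Type*} (G : V → V → Prop) (hG : Acyclic G)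
    (Z : Set V) (u v : V) (hu : u ∉ Z) (hv : v ∉ Z) :
    (∀ P, IsPathFrom G u v P →
      ∃ Q, IsPathFrom (torsoGraph G Z) (Sum.inl u) (Sum.inl v) Q ∧
        (Odd (pathLen Q) ↔ Odd (pathLen P)) ∧
        {x : V | Sum.inl x ∈ Q} \ Z = {x : V | x ∈ P} \ Z) ∧
    (∀ Q, IsPathFrom (torsoGraph G Z) (Sum.inl u) (Sum.inl v) Q →
      ∃ P, IsPathFrom G u v P ∧ (Odd (pathLen P) ↔ Odd (pathLen Q)) ∧
        {x : V | x ∈ P} \ Z = {x : V | Sum.inl x ∈ Q} \ Z) := by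
  refine ⟨fun P hP => ?_, fun Q hQ => ?_⟩
  · obtain ⟨Q, hQ, hPQ⟩ := exists_torsoGraph_path_of_path hG hu hv hP
    exact ⟨Q, hQ, (hPQ.odd_pathLen_iff hP.1.1 hQ.1.1).symm, hPQ.diff_eq.symm⟩
  · obtain ⟨P, hP, hPQ⟩ := exists_path_of_torsoGraph_path hG hQ
    exact ⟨P, hP, hPQ.odd_pathLen_iff hP.1.1 hQ.1.1, hPQ.diff_eq⟩
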